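/- Let Γ = G *_φ H be the free product of groups G and H with amalgamated subgroups A ≤ G and B ≤ H with respect to an isomorphism φ : A → B. Let G′ ≤ G and H′ ≤ H be subgroups such that, setting A′ = G′ ∩ A and B′ = H′ ∩ B, one has φ(A′) = B′, and let Γ′ = ⟨G′, H′⟩ be the subgroup of Γ generated by the images of G′ and H′. Then, identifying G, H and their subgroups with their canonical images in Γ: Γ′ ∩ A = A′, Γ′ ∩ B = B′, Γ′ ∩ G = G′ and Γ′ ∩ H = H′. -/

import Mathlib

open Monoid

/-- The relator set `{a · φ(a)⁻¹ : a ∈ A}` identifying `A ≤ G` with `B ≤ H` inside the free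
product `G ∗ H`. -/
def amalgRels {G H : Type} [Group G] [Group H] (A : Subgroup G) (B : Subgroup H)
    (φ : A ≃* B) : Set (Coprod G H) :=
  {w | ∃ a : A, w = Coprod.inl (a : G) * (Coprod.inr ((φ a : H)))⁻¹}

/-- The free product `G ∗_φ H` of `G` and `H` with the subgroups `A ≤ G` and `B ≤ H` amalgamated
along the isomorphism `φ : A → B`, i.e. `⟨G, H | a = φ(a) for all a ∈ A⟩`. -/
abbrev Amalg {G H : Type} [Group G] [Group H] (A : Subgroup G) (B : Subgroup H)
    (φ : A ≃* B) : Type :=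
  Coprod G H ⧸ Subgroup.normalClosure (amalgRels A B φ)

/-- The canonical homomorphism `G →* G ∗_φ H`. -/
def Amalg.inlHom {G H : Type} [Group G] [Group H] (A : Subgroup G) (B : Subgroup H)
    (φ : A ≃* B) : G →* Amalg A B φ :=
  (QuotientGroup.mk' _).comp Coprod.inl

/-- The canonical homomorphism `H →* G ∗_φ H`. -/
def Amalg.inrHom {G H : Type} [Group G] [Group H] (A : Subgroup G) (B : Subgroup H)
    (φ : A ≃* B) : H →* Amalg A B φ :=
  (QuotientGroup.mk' _).comp Coprod.inr

/-! Inside Mathlib's pushout every element has a unique normal form `a · t₁ ⋯ tₙ` with `a ∈ A`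
and letters `tᵢ` from fixed transversals of `A` in `G` and of `B` in `H`. Choose the transversals
so that every coset meeting `G′` (resp. `H′`) is represented in `G′` (resp. `H′`). Because
`φ(A′) = B′`, the normal words with `a ∈ A′` and all letters in `G′ ∪ H′` then form a set stable
under multiplication by `G′` and by `H′`, hence under `Γ′`. So if `g ∈ G` lies in `Γ′`, its normal
form `a · t₁` lies in this set and `g ∈ G′`; likewise `Γ′ ∩ H = H′`, and the intersections with
`A` and `B` follow. -/

namespace Subgroup

variable {G M P : Type*} [Group G] [Group M] [Group P]

theorem map_comap_inf (f : G →* M) (S : Subgroup M) (U : Subgroup G) :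
    (S.comap f ⊓ U).map f = S ⊓ U.map f := by
  ext x
  constructor
  · rintro ⟨g, ⟨hS, hU⟩, rfl⟩
    exact ⟨hS, g, hU, rfl⟩
  · rintro ⟨hS, g, hU, rfl⟩
    exact ⟨g, ⟨hS, hU⟩, rfl⟩

theorem comap_le_comap_map_comp (S : Subgroup M) (j : G →* M) (f : M →* P) :
    S.comap j ≤ (S.map f).comap (f.comp j) := by
  rw [← comap_comap]
  exact comap_mono (le_comap_map f S)

theorem exists_isComplement_right_equiv_snd_mem (R N : Subgroup G) :
    ∃ (T : Set G) (hT : IsComplement R T), 1 ∈ T ∧ ∀ g ∈ N, ((hT.equiv g).2 : G) ∈ N := by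
  classical
  let s : Quotient (QuotientGroup.rightRel R) → G := fun q =>
    if q = Quotient.mk'' 1 then 1
    else if h : ∃ n ∈ N, Quotient.mk'' n = q then h.choose else q.out
  have hs : ∀ q, Quotient.mk'' (s q) = q := by
    intro q
    simp only [s]
    split_ifs with h1 h2
    · exact h1.symm
    · exact h2.choose_spec.2
    · exact q.out_eq'
  have hsN : ∀ g ∈ N, s (Quotient.mk'' g) ∈ N := by
    intro g hg
    simp only [s]
    split_ifs with h1 h2
    · exact N.one_mem
    · exact h2.choose_spec.1
    · exact absurd ⟨g, hg, rfl⟩ h2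
  have hT := isComplement_range_right hs
  refine ⟨_, hT, ⟨_, if_pos rfl⟩, fun g hg => ?_⟩
  obtain ⟨q, hq⟩ := (hT.equiv g).2.2
  have hqg : q = Quotient.mk'' g := by
    rw [← hs q, hq]
    refine Quotient.sound' ?_
    rw [QuotientGroup.rightRel_apply, ← hT.equiv_fst_eq_mul_inv]
    exact (hT.equiv g).1.2
  rw [← hq, hqg]
  exact hsN g hg

end Subgroup

namespace Monoid.PushoutI

open CoprodI Subgroup

variable {ι : Type*} {G : ι → Type*} [∀ i, Group (G i)] {H : Type*} [Group H]
  {φ : ∀ i, H →* G i}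

namespace NormalWord

/-- Every coset of `range (φ i)` meeting `N i` is represented in `N i`
(`((d.compl i).equiv g).2` is the representative of the coset of `g`). -/
def Transversal.IsAdapted (d : Transversal φ) (N : ∀ i, Subgroup (G i)) : Prop :=
  ∀ i, ∀ g ∈ N i, (((d.compl i).equiv g).2 : G i) ∈ N i

theorem exists_transversal_isAdapted (hφ : ∀ i, Function.Injective (φ i))
    (N : ∀ i, Subgroup (G i)) : ∃ d : Transversal φ, d.IsAdapted N := by
  choose T hT hT1 hTN using fun i => (φ i).range.exists_isComplement_right_equiv_snd_mem (N i)
  exact ⟨⟨hφ, T, hT1, hT⟩, hTN⟩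

variable {d : Transversal φ} {K : Subgroup H} {N : ∀ i, Subgroup (G i)}

def InSubgroups (K : Subgroup H) (N : ∀ i, Subgroup (G i)) (w : NormalWord d) : Prop :=
  w.head ∈ K ∧ ∀ i g, ⟨i, g⟩ ∈ w.toList → g ∈ N i

theorem inSubgroups_empty : (empty : NormalWord d).InSubgroups K N :=
  ⟨K.one_mem, by simp⟩

variable [DecidableEq ι] [∀ i, DecidableEq (G i)]

theorem rcons_inSubgroups_iff (hd : d.IsAdapted N) (hN : ∀ i, (N i).comap (φ i) = K) {i : ι}
    (p : Pair d i) :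
    (rcons i p).InSubgroups K N ↔
      p.head ∈ N i ∧ ∀ j g, ⟨j, g⟩ ∈ p.tail.toList → g ∈ N j := by
  set n := (d.compl i).equiv p.head
  have hhead : (rcons i p).head ∈ K ↔ (n.1 : G i) ∈ N i := by
    rw [← hN i, mem_comap]
    exact iff_of_eq (congrArg (· ∈ N i) (MonoidHom.apply_ofInjective_symm _ _))
  have hlist : ∀ j g, ⟨j, g⟩ ∈ (rcons i p).toList ↔
      ⟨j, g⟩ ∈ p.tail.toList ∨ g ≠ 1 ∧ ∃ h : i = j, g = h ▸ (n.2 : G i) := by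
    intro j g
    show _ ∈ ((Word.equivPair i).symm { p.toPair with head := (n.2 : G i) }).toList ↔ _
    rw [Word.equivPair_symm, Word.mem_rcons_iff]
  have hsplit : p.head = n.1 * n.2 := ((d.compl i).equiv_fst_mul_equiv_snd p.head).symm
  constructor
  · rintro ⟨hK, hL⟩
    have hsnd : (n.2 : G i) ∈ N i := by
      by_cases h1 : (n.2 : G i) = 1
      · rw [h1]
        exact one_mem _
      · exact hL i _ ((hlist i _).2 (Or.inr ⟨h1, rfl, rfl⟩))
    exact ⟨hsplit ▸ mul_mem (hhead.1 hK) hsnd, fun j g hg => hL j g ((hlist j g).2 (Or.inl hg))⟩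
  · rintro ⟨hp, ht⟩
    have hsnd : (n.2 : G i) ∈ N i := hd i _ hp
    refine ⟨hhead.2 ?_, fun j g hg => ?_⟩
    · rw [(d.compl i).equiv_fst_eq_mul_inv]
      exact mul_mem hp (inv_mem hsnd)
    · rcases (hlist j g).1 hg with hg | ⟨-, rfl, rfl⟩
      · exact ht j g hg
      · exact hsnd

theorem inSubgroups_iff_equivPair (hd : d.IsAdapted N) (hN : ∀ i, (N i).comap (φ i) = K)
    (i : ι) (w : NormalWord d) :
    w.InSubgroups K N ↔
      (equivPair i w).head ∈ N i ∧ ∀ j g, ⟨j, g⟩ ∈ (equivPair i w).tail.toList → g ∈ N j := by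
  conv_lhs => rw [← (equivPair i).symm_apply_apply w]
  exact rcons_inSubgroups_iff hd hN _

theorem InSubgroups.of_smul (hd : d.IsAdapted N) (hN : ∀ i, (N i).comap (φ i) = K)
    {w : NormalWord d} (hw : w.InSubgroups K N) {i : ι} {g : G i} (hg : g ∈ N i) :
    (of (φ := φ) i g • w).InSubgroups K N := by
  obtain ⟨hhead, htail⟩ := (inSubgroups_iff_equivPair hd hN i w).1 hw
  exact (rcons_inSubgroups_iff hd hN _).2 ⟨mul_mem hg hhead, htail⟩

theorem InSubgroups.smul (hd : d.IsAdapted N) (hN : ∀ i, (N i).comap (φ i) = K)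
    {w : NormalWord d} (hw : w.InSubgroups K N) {x : PushoutI φ}
    (hx : x ∈ ⨆ i, (N i).map (of i)) : (x • w).InSubgroups K N := by
  refine iSup_induction _ hx (C := fun x => ∀ w : NormalWord d, w.InSubgroups K N →
    (x • w).InSubgroups K N) ?_ ?_ ?_ w hw
  · rintro i _ ⟨g, hg, rfl⟩ w hw
    exact hw.of_smul hd hN hg
  · intro w hw
    rwa [one_smul]
  · intro x y hx hy w hw
    rw [mul_smul]
    exact hx _ (hy w hw)

end NormalWord

open NormalWord

theorem comap_of_iSup_map_of (hφ : ∀ i, Function.Injective (φ i)) (N : ∀ i, Subgroup (G i))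
    (K : Subgroup H) (hN : ∀ i, (N i).comap (φ i) = K) (j : ι) :
    (⨆ i, (N i).map (of (φ := φ) i)).comap (of j) = N j := by
  classical
  refine le_antisymm (fun g hg => ?_) (map_le_iff_le_comap.1 (le_iSup_of_le j le_rfl))
  obtain ⟨d, hd⟩ := exists_transversal_isAdapted hφ N
  have hempty := (inSubgroups_iff_equivPair hd hN j _).1 (inSubgroups_empty (d := d))
  have hg := (inSubgroups_iff_equivPair hd hN j _).1 (inSubgroups_empty.smul hd hN hg)
  rw [summand_smul_def, Equiv.apply_symm_apply] at hg
  simpa using mul_mem hg.1 (inv_mem hempty.1)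

end Monoid.PushoutI

namespace Amalg

open Subgroup

variable {G H : Type} [Group G] [Group H]

/-- `G ∗_φ H` is compared with `Monoid.PushoutI` of the family `true ↦ G`, `false ↦ H` over `A`,
with legs `A.subtype` and `B.subtype ∘ φ`. -/
abbrev Factor (G H : Type) (b : Bool) : Type := cond b G H

instance instGroupFactor : ∀ b, Group (Factor G H b)
  | true => ‹Group G›
  | false => ‹Group H›

def legs (A : Subgroup G) (B : Subgroup H) (φ : A ≃* B) : ∀ b, A →* Factor G H b
  | true => A.subtype
  | false => B.subtype.comp φ.toMonoidHom

def factorSubgroup (G' : Subgroup G) (H' : Subgroup H) : ∀ b, Subgroup (Factor G H b)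
  | true => G'
  | false => H'

variable (A : Subgroup G) (B : Subgroup H) (φ : A ≃* B)

theorem legs_injective : ∀ b, Function.Injective (legs A B φ b)
  | true => A.subtype_injective
  | false => B.subtype_injective.comp φ.injective

def toPushoutI : Amalg A B φ →* PushoutI (legs A B φ) :=
  QuotientGroup.lift _
    (Coprod.lift (PushoutI.of (φ := legs A B φ) true) (PushoutI.of (φ := legs A B φ) false)) <|
    normalClosure_le_normal <| by
      rintro _ ⟨a, rfl⟩
      rw [SetLike.mem_coe, MonoidHom.mem_ker, map_mul, map_inv, Coprod.lift_apply_inl,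
        Coprod.lift_apply_inr, mul_inv_eq_one]
      exact (PushoutI.of_apply_eq_base (legs A B φ) true a).trans
        (PushoutI.of_apply_eq_base (legs A B φ) false a).symm

theorem map_toPushoutI_sup (G' : Subgroup G) (H' : Subgroup H) :
    (G'.map (inlHom A B φ) ⊔ H'.map (inrHom A B φ)).map (toPushoutI A B φ) =
      ⨆ b, (factorSubgroup G' H' b).map (PushoutI.of (φ := legs A B φ) b) := by
  rw [iSup_bool_eq, Subgroup.map_sup, map_map, map_map]
  rfl

variable {A B φ} {G' : Subgroup G} {H' : Subgroup H}

theorem comap_of_map_toPushoutI_sup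
    (hK : G'.subgroupOf A = H'.comap (B.subtype.comp φ.toMonoidHom)) (b : Bool) :
    ((G'.map (inlHom A B φ) ⊔ H'.map (inrHom A B φ)).map (toPushoutI A B φ)).comap
      (PushoutI.of b) = factorSubgroup G' H' b := by
  rw [map_toPushoutI_sup]
  refine PushoutI.comap_of_iSup_map_of (legs_injective A B φ) _ (G'.subgroupOf A) ?_ b
  rintro (_ | _)
  · exact hK.symm
  · rfl

theorem comap_inlHom_sup (hK : G'.subgroupOf A = H'.comap (B.subtype.comp φ.toMonoidHom)) :
    (G'.map (inlHom A B φ) ⊔ H'.map (inrHom A B φ)).comap (inlHom A B φ) = G' :=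
  le_antisymm ((comap_le_comap_map_comp _ _ (toPushoutI A B φ)).trans_eq
      (comap_of_map_toPushoutI_sup hK true))
    (map_le_iff_le_comap.1 le_sup_left)

theorem comap_inrHom_sup (hK : G'.subgroupOf A = H'.comap (B.subtype.comp φ.toMonoidHom)) :
    (G'.map (inlHom A B φ) ⊔ H'.map (inrHom A B φ)).comap (inrHom A B φ) = H' :=
  le_antisymm ((comap_le_comap_map_comp _ _ (toPushoutI A B φ)).trans_eq
      (comap_of_map_toPushoutI_sup hK false))
    (map_le_iff_le_comap.1 le_sup_right)

end Amalg

/-- **Lemma (subgroups of amalgamated products), parts (2) and (3).**  Let `Γ = G ∗_φ H` with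
amalgamated subgroups `A ≤ G`, `B ≤ H` along `φ : A ≃ B`.  Let `G′ ≤ G` and `H′ ≤ H` be subgroups
such that `φ(A′) = B′`, where `A′ = G′ ∩ A` and `B′ = H′ ∩ B`, and let `Γ′ = ⟨G′, H′⟩ ≤ Γ`.
Then, identifying `G`, `H` and their subgroups with their canonical images in `Γ`:
`Γ′ ∩ A = A′`, `Γ′ ∩ B = B′`, `Γ′ ∩ G = G′` and `Γ′ ∩ H = H′`. -/
theorem amalg_subgroup_intersections {G H : Type} [Group G] [Group H]
    (A : Subgroup G) (B : Subgroup H) (φ : A ≃* B)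
    (G' : Subgroup G) (H' : Subgroup H)
    (hφ : Subgroup.map (B.subtype.comp φ.toMonoidHom) ((G' ⊓ A).subgroupOf A)
      = H' ⊓ B) :
    ((G'.map (Amalg.inlHom A B φ) ⊔ H'.map (Amalg.inrHom A B φ))
        ⊓ A.map (Amalg.inlHom A B φ) = (G' ⊓ A).map (Amalg.inlHom A B φ)) ∧
    ((G'.map (Amalg.inlHom A B φ) ⊔ H'.map (Amalg.inrHom A B φ))
        ⊓ B.map (Amalg.inrHom A B φ) = (H' ⊓ B).map (Amalg.inrHom A B φ)) ∧
    ((G'.map (Amalg.inlHom A B φ) ⊔ H'.map (Amalg.inrHom A B φ))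
        ⊓ (Amalg.inlHom A B φ).range = G'.map (Amalg.inlHom A B φ)) ∧
    ((G'.map (Amalg.inlHom A B φ) ⊔ H'.map (Amalg.inrHom A B φ))
        ⊓ (Amalg.inrHom A B φ).range = H'.map (Amalg.inrHom A B φ)) := by
  have hK : G'.subgroupOf A = H'.comap (B.subtype.comp φ.toMonoidHom) := by
    have hinj : Function.Injective (B.subtype.comp φ.toMonoidHom) :=
      B.subtype_injective.comp φ.injective
    have hB : B.comap (B.subtype.comp φ.toMonoidHom) = ⊤ := eq_top_iff.2 fun a _ => (φ a).2
    have h := congrArg (Subgroup.comap (B.subtype.comp φ.toMonoidHom)) hφ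
    rwa [Subgroup.comap_map_eq_self_of_injective hinj,
      Subgroup.inf_subgroupOf_right, Subgroup.comap_inf, hB, inf_top_eq] at h
  have hG := Amalg.comap_inlHom_sup hK
  have hH := Amalg.comap_inrHom_sup hK
  refine ⟨?_, ?_, ?_, ?_⟩
  · rw [← Subgroup.map_comap_inf, hG]
  · rw [← Subgroup.map_comap_inf, hH]
  · rw [MonoidHom.range_eq_map, ← Subgroup.map_comap_inf, hG, inf_top_eq]
  · rw [MonoidHom.range_eq_map, ← Subgroup.map_comap_inf, hH, inf_top_eq]
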